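/- Let r₁, r₂ ∈ {2,3,4} with r₁ ≥ r₂, and let L₁, L₂ be positive integers with Lᵢ = 1 if rᵢ = 4, Lᵢ = 2 if rᵢ = 3, Lᵢ ≤ 5 if rᵢ = 2. Let b₁, b₂ be positive integers such that 24 = 24/r₁ + b₁ + 24/r₂ + b₂, (r₁-1)·L₁ = (r₂-1)²·L₂ - b₂, and (r₂-1)·L₂ = (r₁-1)²·L₁ - b₁. Then (r₁, L₁, b₁, r₂, L₂, b₂) is one of: (4,1,6,4,1,6), (4,1,5,3,2,5), (4,1,5,2,4,1), (4,1,4,2,5,2), (3,2,4,3,2,4), (3,2,3,2,5,1). -/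

import Mathlib

/-!
Adding the two intersection equations gives
`b₁ + b₂ = (r₁ - 1)(r₁ - 2) L₁ + (r₂ - 1)(r₂ - 2) L₂`, which vanishes when `r₁ = r₂ = 2`;
since `2 ≤ r₂ ≤ r₁`, positivity of the degrees forces `r₁ ∈ {3, 4}`, so `L₁` is fixed.
If `r₂ ≥ 3` then `L₂` is fixed too and the two equations determine `b₁, b₂`.
If `r₂ = 2`, the first equation reads `L₂ = (r₁ - 1) L₁ + b₂ > (r₁ - 1) L₁`, and `L₂ ≤ 5`
leaves `L₂ ∈ {4, 5}` for `r₁ = 4` and `L₂ = 5` for `r₁ = 3`.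
-/

lemma blowup_degree_sum {r₁ r₂ L₁ L₂ b₁ b₂ : ℤ}
    (e2 : (r₁ - 1) * L₁ = (r₂ - 1) ^ 2 * L₂ - b₂)
    (e3 : (r₂ - 1) * L₂ = (r₁ - 1) ^ 2 * L₁ - b₁) :
    b₁ + b₂ = (r₁ - 1) * (r₁ - 2) * L₁ + (r₂ - 1) * (r₂ - 2) * L₂ := by
  linear_combination e2 + e3

lemma not_both_index_two {r₁ r₂ L₁ L₂ b₁ b₂ : ℤ}
    (e2 : (r₁ - 1) * L₁ = (r₂ - 1) ^ 2 * L₂ - b₂)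
    (e3 : (r₂ - 1) * L₂ = (r₁ - 1) ^ 2 * L₁ - b₁)
    (hb₁ : 0 < b₁) (hb₂ : 0 < b₂) : ¬(r₁ = 2 ∧ r₂ = 2) := by
  rintro ⟨rfl, rfl⟩
  linarith [blowup_degree_sum e2 e3]

lemma fano_target_cases {r L : ℤ} (hr : r = 2 ∨ r = 3 ∨ r = 4)
    (h4 : r = 4 → L = 1) (h3 : r = 3 → L = 2) :
    r = 2 ∨ (r = 3 ∧ L = 2) ∨ (r = 4 ∧ L = 1) := by
  rcases hr with h | h | h
  exacts [.inl h, .inr (.inl ⟨h, h3 h⟩), .inr (.inr ⟨h, h4 h⟩)]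

theorem stmt_16_general (r₁ r₂ L₁ L₂ b₁ b₂ : ℤ)
    (hr₁ : r₁ = 2 ∨ r₁ = 3 ∨ r₁ = 4) (hr₂ : r₂ = 2 ∨ r₂ = 3 ∨ r₂ = 4)
    (hr : r₂ ≤ r₁)
    (hb₁ : 0 < b₁) (hb₂ : 0 < b₂)
    (h14 : r₁ = 4 → L₁ = 1) (h13 : r₁ = 3 → L₁ = 2)
    (h24 : r₂ = 4 → L₂ = 1) (h23 : r₂ = 3 → L₂ = 2) (h22 : r₂ = 2 → L₂ ≤ 5)
    (e2 : (r₁ - 1) * L₁ = (r₂ - 1) ^ 2 * L₂ - b₂)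
    (e3 : (r₂ - 1) * L₂ = (r₁ - 1) ^ 2 * L₁ - b₁) :
    (r₁, L₁, b₁, r₂, L₂, b₂) = (4, 1, 6, 4, 1, 6) ∨
    (r₁, L₁, b₁, r₂, L₂, b₂) = (4, 1, 5, 3, 2, 5) ∨
    (r₁, L₁, b₁, r₂, L₂, b₂) = (4, 1, 5, 2, 4, 1) ∨
    (r₁, L₁, b₁, r₂, L₂, b₂) = (4, 1, 4, 2, 5, 2) ∨
    (r₁, L₁, b₁, r₂, L₂, b₂) = (3, 2, 4, 3, 2, 4) ∨
    (r₁, L₁, b₁, r₂, L₂, b₂) = (3, 2, 3, 2, 5, 1) := by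
  obtain ⟨rfl, rfl⟩ | ⟨rfl, rfl⟩ : (r₁ = 3 ∧ L₁ = 2) ∨ (r₁ = 4 ∧ L₁ = 1) := by
    rcases fano_target_cases hr₁ h14 h13 with rfl | h | h
    · exact absurd ⟨rfl, by omega⟩ (not_both_index_two e2 e3 hb₁ hb₂)
    exacts [.inl h, .inr h]
  all_goals
    rcases fano_target_cases hr₂ h24 h23 with rfl | ⟨rfl, rfl⟩ | ⟨rfl, rfl⟩
    · have hL₂ := h22 rfl
      norm_num at e2 e3 ⊢
      omega
    all_goals
      norm_num at e2 e3 ⊢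
      omega

theorem stmt_16 (r₁ r₂ L₁ L₂ b₁ b₂ : ℤ)
    (hr₁ : r₁ = 2 ∨ r₁ = 3 ∨ r₁ = 4) (hr₂ : r₂ = 2 ∨ r₂ = 3 ∨ r₂ = 4)
    (hr : r₂ ≤ r₁)
    (hL₁ : 0 < L₁) (hL₂ : 0 < L₂) (hb₁ : 0 < b₁) (hb₂ : 0 < b₂)
    (h14 : r₁ = 4 → L₁ = 1) (h13 : r₁ = 3 → L₁ = 2) (h12 : r₁ = 2 → L₁ ≤ 5)
    (h24 : r₂ = 4 → L₂ = 1) (h23 : r₂ = 3 → L₂ = 2) (h22 : r₂ = 2 → L₂ ≤ 5)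
    (e1 : (24 : ℚ) = 24 / (r₁ : ℚ) + (b₁ : ℚ) + 24 / (r₂ : ℚ) + (b₂ : ℚ))
    (e2 : (r₁ - 1) * L₁ = (r₂ - 1) ^ 2 * L₂ - b₂)
    (e3 : (r₂ - 1) * L₂ = (r₁ - 1) ^ 2 * L₁ - b₁) :
    (r₁, L₁, b₁, r₂, L₂, b₂) = (4, 1, 6, 4, 1, 6) ∨
    (r₁, L₁, b₁, r₂, L₂, b₂) = (4, 1, 5, 3, 2, 5) ∨
    (r₁, L₁, b₁, r₂, L₂, b₂) = (4, 1, 5, 2, 4, 1) ∨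
    (r₁, L₁, b₁, r₂, L₂, b₂) = (4, 1, 4, 2, 5, 2) ∨
    (r₁, L₁, b₁, r₂, L₂, b₂) = (3, 2, 4, 3, 2, 4) ∨
    (r₁, L₁, b₁, r₂, L₂, b₂) = (3, 2, 3, 2, 5, 1) :=
  stmt_16_general r₁ r₂ L₁ L₂ b₁ b₂ hr₁ hr₂ hr hb₁ hb₂ h14 h13 h24 h23 h22 e2 e3
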